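/- arXiv:1502.07014 — 2 statements merged into one kernel-verified Lean document; each statement's English description precedes it below -/
import Mathlib

section
/- Suppose ℓ, μ, p are non-empty binary words satisfying h(S) = ℓμ = μ^R ℓ^R and h(L) = ℓℓ^R = ℓμ(complement of μ^R)p. Then h(L) = p^R (complement of μ) ℓ μ; in particular h(S) = ℓμ is both a prefix and a suffix of h(L). -/
/-! Cancelling `ℓ` in `ℓ ℓ^R = ℓ μ ν` gives `ℓ = ν^R μ^R`, so `ℓ ℓ^R = ν^R (ℓ μ)^R`, and
`ℓ μ` is a palindrome. With `ν = (comp μ^R) p` we have `ν^R = p^R (comp μ)`. -/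

def comp (w : List Bool) : List Bool := w.map (fun b => !b)

theorem reverse_comp (w : List Bool) : (comp w).reverse = comp w.reverse :=
  List.map_reverse.symm

namespace List

variable {α : Type*}

theorem eq_reverse_append_reverse_of_self_append_reverse_eq {ℓ μ ν : List α}
    (h : ℓ ++ ℓ.reverse = ℓ ++ μ ++ ν) : ℓ = ν.reverse ++ μ.reverse := by
  have hrev : ℓ.reverse = μ ++ ν := by
    rw [append_assoc] at h
    exact append_cancel_left h
  rw [← reverse_reverse ℓ, hrev, reverse_append]

theorem self_append_reverse_eq_of_reverse_eq {ℓ μ ν : List α}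
    (h : ℓ ++ ℓ.reverse = ℓ ++ μ ++ ν) (hpal : (ℓ ++ μ).reverse = ℓ ++ μ) :
    ℓ ++ ℓ.reverse = ν.reverse ++ (ℓ ++ μ) := by
  nth_rewrite 1 [eq_reverse_append_reverse_of_self_append_reverse_eq h]
  rw [append_assoc, ← reverse_append, hpal]

end List

theorem stmt_9_general (ℓ μ p hS hL : List Bool)
    (h1 : hS = ℓ ++ μ) (h2 : hS = μ.reverse ++ ℓ.reverse)
    (h3 : hL = ℓ ++ ℓ.reverse)
    (h4 : hL = ℓ ++ μ ++ comp μ.reverse ++ p) :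
    hL = p.reverse ++ comp μ ++ ℓ ++ μ ∧ hS <+: hL ∧ hS <:+ hL := by
  have hpal : (ℓ ++ μ).reverse = ℓ ++ μ := by rw [List.reverse_append, ← h2, h1]
  have hsuffix : hL = (p.reverse ++ comp μ) ++ hS := by
    rw [h3, List.self_append_reverse_eq_of_reverse_eq (by rw [← h3, h4, List.append_assoc]) hpal,
      List.reverse_append, reverse_comp, List.reverse_reverse, h1]
  refine ⟨by rw [hsuffix, h1]; simp only [List.append_assoc], ?_, ⟨_, hsuffix.symm⟩⟩
  exact ⟨comp μ.reverse ++ p, by rw [h4, h1]; simp only [List.append_assoc]⟩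

theorem stmt_9 (ℓ μ p hS hL : List Bool)
    (hℓ : ℓ ≠ []) (hμ : μ ≠ []) (hp : p ≠ [])
    (h1 : hS = ℓ ++ μ) (h2 : hS = μ.reverse ++ ℓ.reverse)
    (h3 : hL = ℓ ++ ℓ.reverse)
    (h4 : hL = ℓ ++ μ ++ comp μ.reverse ++ p) :
    hL = p.reverse ++ comp μ ++ ℓ ++ μ ∧ hS <+: hL ∧ hS <:+ hL :=
  stmt_9_general ℓ μ p hS hL h1 h2 h3 h4
end

section
/- Let Φ be the morphism on {S, L}* defined by Φ(S) = SL and Φ(L) = SLL, and let D be the morphism with D(L) = LS, D(S) = L. Then D²(w) · L = L · Φ(w) for all w in {S, L}*. -/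
/-- Letters: `false` = S, `true` = L. -/
def Phi : Bool → List Bool
  | false => [false, true]
  | true => [false, true, true]

def Dm : Bool → List Bool
  | false => [true]
  | true => [true, false]

theorem stmt_13 (w : List Bool) :
    ((w.flatMap Dm).flatMap Dm) ++ [true] = [true] ++ w.flatMap Phi := by
  induction w with
  | nil => rfl
  | cons a w ih =>
    cases a <;> simp_all [List.flatMap_cons, Phi, Dm]
end
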